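/- Let H₁, H₂, U, Y be complex Hilbert spaces and let M = [[A, B], [C, D]] : (H₁ ⊕ H₂) ⊕ U → (H₁ ⊕ H₂) ⊕ Y be a contraction, where A ∈ B(H₁ ⊕ H₂), B ∈ B(U, H₁ ⊕ H₂), C ∈ B(H₁ ⊕ H₂, Y), D ∈ B(U,Y). Then for every (z,ζ) ∈ D² the operator I − A·diag(zI_{H₁}, ζI_{H₂}) is invertible, and the function f(z,ζ) = D + C·diag(zI_{H₁}, ζI_{H₂})·(I − A·diag(zI_{H₁}, ζI_{H₂}))⁻¹·B is analytic on D² and satisfies ‖f(z,ζ)‖ ≤ 1 for all (z,ζ) ∈ D². -/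
import Mathlib

set_option maxHeartbeats 1600000
set_option synthInstance.maxHeartbeats 400000
noncomputable section

open ContinuousLinearMap

/-- The open bidisk `𝔻² = {(z,ζ) : |z| < 1, |ζ| < 1}`. -/
def bidisk : Set (ℂ × ℂ) := {w : ℂ × ℂ | ‖w.1‖ < 1 ∧ ‖w.2‖ < 1}

variable {H₁ H₂ U Y : Type*}
  [NormedAddCommGroup H₁] [InnerProductSpace ℂ H₁] [CompleteSpace H₁]
  [NormedAddCommGroup H₂] [InnerProductSpace ℂ H₂] [CompleteSpace H₂]
  [NormedAddCommGroup U] [InnerProductSpace ℂ U] [CompleteSpace U]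
  [NormedAddCommGroup Y] [InnerProductSpace ℂ Y] [CompleteSpace Y]

/-- The block diagonal operator `diag(z I_{H₁}, ζ I_{H₂})` acting on `H₁ ⊕ H₂`. -/
def diagOp₂ (z ζ : ℂ) : (H₁ × H₂) →L[ℂ] (H₁ × H₂) :=
  (z • ContinuousLinearMap.id ℂ H₁).prodMap (ζ • ContinuousLinearMap.id ℂ H₂)

/-- The colligation `M = [[A,B],[C,D]] : (H₁ ⊕ H₂) ⊕ U → (H₁ ⊕ H₂) ⊕ Y` is a contraction
(with respect to the Hilbert space direct sum norms). -/
def ColligationContractive (A : (H₁ × H₂) →L[ℂ] (H₁ × H₂)) (B : U →L[ℂ] (H₁ × H₂))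
    (C : (H₁ × H₂) →L[ℂ] Y) (D : U →L[ℂ] Y) : Prop :=
  ∀ (h₁ : H₁) (h₂ : H₂) (u : U),
    ‖(A (h₁, h₂) + B u).1‖ ^ 2 + ‖(A (h₁, h₂) + B u).2‖ ^ 2 + ‖C (h₁, h₂) + D u‖ ^ 2 ≤
      ‖h₁‖ ^ 2 + ‖h₂‖ ^ 2 + ‖u‖ ^ 2

/-- If some power of `x` has norm `< 1`, then `1 - x` is a unit. -/
lemma isUnit_one_sub_of_pow_norm_lt_one {R : Type*} [NormedRing R] [CompleteSpace R]
    {x : R} {n : ℕ} (h : ‖x ^ n‖ < 1) : IsUnit (1 - x) := by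
  have hu : IsUnit (1 - x ^ n) := isUnit_one_sub_of_norm_lt_one h
  set S := ∑ i ∈ Finset.range n, x ^ i with hS
  set v := Ring.inverse (1 - x ^ n) with hv
  have h1 : (1 - x) * S = 1 - x ^ n := mul_neg_geom_sum x n
  have h2 : S * (1 - x) = 1 - x ^ n := geom_sum_mul_neg x n
  have hr : (1 - x) * (S * v) = 1 := by
    rw [← mul_assoc, h1, Ring.mul_inverse_cancel _ hu]
  have hl : (v * S) * (1 - x) = 1 := by
    rw [mul_assoc, h2, Ring.inverse_mul_cancel _ hu]
  have hrl : v * S = S * v := by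
    calc v * S = (v * S) * ((1 - x) * (S * v)) := by rw [hr, mul_one]
    _ = ((v * S) * (1 - x)) * (S * v) := by rw [mul_assoc, mul_assoc, mul_assoc]
    _ = S * v := by rw [hl, one_mul]
  exact ⟨⟨1 - x, S * v, hr, by rw [← hrl]; exact hl⟩, rfl⟩

lemma aux_transfer_analytic {E G : Type*} [NormedAddCommGroup E] [NormedSpace ℂ E]
    [CompleteSpace E] [NormedAddCommGroup G] [NormedSpace ℂ G]
    (Φ : (E →L[ℂ] E) →L[ℂ] G) (a : E →L[ℂ] E) (d : G)
    (L : (ℂ × ℂ) →L[ℂ] (E →L[ℂ] E)) {w : ℂ × ℂ}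
    (hu : IsUnit (1 - a * L w)) :
    AnalyticAt ℂ (fun w : ℂ × ℂ => d + Φ (L w * Ring.inverse (1 - a * L w))) w := by
  have hg : AnalyticAt ℂ (fun w : ℂ × ℂ => L w) w := L.analyticAt w
  have h2 : AnalyticAt ℂ (Ring.inverse : (E →L[ℂ] E) → (E →L[ℂ] E)) (1 - a * L w) := by
    have := analyticAt_inverse (𝕜 := ℂ) hu.unit
    rwa [IsUnit.unit_spec] at this
  have hinv : AnalyticAt ℂ (fun w : ℂ × ℂ => Ring.inverse (1 - a * L w)) w :=
    AnalyticAt.comp (g := (Ring.inverse : (E →L[ℂ] E) → (E →L[ℂ] E)))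
      (f := fun w : ℂ × ℂ => 1 - a * L w)
      h2 (analyticAt_const.sub (analyticAt_const.mul hg))
  exact analyticAt_const.add ((Φ.analyticAt _).comp (hg.mul hinv))

theorem transfer_function_of_contractive_colligation_is_schur
    (A : (H₁ × H₂) →L[ℂ] (H₁ × H₂)) (B : U →L[ℂ] (H₁ × H₂)) (C : (H₁ × H₂) →L[ℂ] Y)
    (D : U →L[ℂ] Y) (hM : ColligationContractive A B C D) :
    (∀ w ∈ bidisk, IsUnit (1 - A * diagOp₂ w.1 w.2)) ∧
      AnalyticOnNhd ℂ
        (fun w : ℂ × ℂ =>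
          D + C ∘L diagOp₂ w.1 w.2 ∘L Ring.inverse (1 - A * diagOp₂ w.1 w.2) ∘L B)
        bidisk ∧
      ∀ w ∈ bidisk,
        ‖D + C ∘L diagOp₂ w.1 w.2 ∘L Ring.inverse (1 - A * diagOp₂ w.1 w.2) ∘L B‖ ≤ 1 := by
  -- A is a quadratic contraction
  have hA : ∀ h : H₁ × H₂, ‖(A h).1‖ ^ 2 + ‖(A h).2‖ ^ 2 ≤ ‖h.1‖ ^ 2 + ‖h.2‖ ^ 2 := by
    intro h
    have := hM h.1 h.2 0
    simp only [map_zero, add_zero, norm_zero, Prod.mk.eta] at this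
    nlinarith [sq_nonneg ‖C h‖]
  have hGapp : ∀ (z ζ : ℂ) (h : H₁ × H₂), diagOp₂ z ζ h = (z • h.1, ζ • h.2) := by
    intro z ζ h; rfl
  -- invertibility
  have hunit : ∀ w ∈ bidisk, IsUnit (1 - A * diagOp₂ w.1 w.2) := by
    rintro ⟨z, ζ⟩ ⟨hz, hζ⟩
    set r : ℝ := max ‖z‖ ‖ζ‖ with hr
    have hr0 : 0 ≤ r := le_trans (norm_nonneg z) (le_max_left _ _)
    have hr1 : r < 1 := max_lt hz hζ
    set x := A * diagOp₂ z ζ with hx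
    have hQ : ∀ h : H₁ × H₂, ‖(x h).1‖ ^ 2 + ‖(x h).2‖ ^ 2 ≤
        r ^ 2 * (‖h.1‖ ^ 2 + ‖h.2‖ ^ 2) := by
      intro h
      have h1 : x h = A (diagOp₂ z ζ h) := rfl
      have h2 := hA (diagOp₂ z ζ h)
      rw [hGapp] at h2
      simp only [norm_smul] at h2
      have hz' : ‖z‖ ≤ r := le_max_left _ _
      have hζ' : ‖ζ‖ ≤ r := le_max_right _ _
      rw [h1, hGapp z ζ h]
      nlinarith [norm_nonneg h.1, norm_nonneg h.2, norm_nonneg z, norm_nonneg ζ,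
        sq_nonneg ‖h.1‖, sq_nonneg ‖h.2‖,
        mul_le_mul_of_nonneg_right (mul_le_mul hz' hz' (norm_nonneg z) hr0)
          (sq_nonneg ‖h.1‖),
        mul_le_mul_of_nonneg_right (mul_le_mul hζ' hζ' (norm_nonneg ζ) hr0)
          (sq_nonneg ‖h.2‖)]
    have hQn : ∀ (n : ℕ) (h : H₁ × H₂), ‖((x ^ n) h).1‖ ^ 2 + ‖((x ^ n) h).2‖ ^ 2 ≤
        (r ^ 2) ^ n * (‖h.1‖ ^ 2 + ‖h.2‖ ^ 2) := by
      intro n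
      induction n with
      | zero => intro h; simp
      | succ n ih =>
        intro h
        have h1 : (x ^ (n + 1)) h = x ((x ^ n) h) := by
          rw [pow_succ' x n]; rfl
        rw [h1]
        calc ‖(x ((x ^ n) h)).1‖ ^ 2 + ‖(x ((x ^ n) h)).2‖ ^ 2
            ≤ r ^ 2 * (‖((x ^ n) h).1‖ ^ 2 + ‖((x ^ n) h).2‖ ^ 2) := hQ _
          _ ≤ r ^ 2 * ((r ^ 2) ^ n * (‖h.1‖ ^ 2 + ‖h.2‖ ^ 2)) := by
              exact mul_le_mul_of_nonneg_left (ih h) (sq_nonneg r)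
          _ = (r ^ 2) ^ (n + 1) * (‖h.1‖ ^ 2 + ‖h.2‖ ^ 2) := by ring
    have hxn : ∀ n : ℕ, ‖x ^ n‖ ≤ 2 * r ^ n := by
      intro n
      apply ContinuousLinearMap.opNorm_le_bound _
        (by positivity)
      intro h
      have hb := hQn n h
      have hb1 : ‖h.1‖ ≤ ‖h‖ := norm_fst_le h
      have hb2 : ‖h.2‖ ≤ ‖h‖ := norm_snd_le h
      have key : ‖(x ^ n) h‖ ^ 2 ≤ (2 * r ^ n * ‖h‖) ^ 2 := by
        have hmax : ‖(x ^ n) h‖ = max ‖((x ^ n) h).1‖ ‖((x ^ n) h).2‖ := rfl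
        have h3 : ‖(x ^ n) h‖ ^ 2 ≤ ‖((x ^ n) h).1‖ ^ 2 + ‖((x ^ n) h).2‖ ^ 2 := by
          rw [hmax]
          rcases max_cases ‖((x ^ n) h).1‖ ‖((x ^ n) h).2‖ with ⟨he, _⟩ | ⟨he, _⟩ <;>
            rw [he] <;> nlinarith [sq_nonneg ‖((x ^ n) h).1‖, sq_nonneg ‖((x ^ n) h).2‖]
        have h4 : (r ^ 2) ^ n * (‖h.1‖ ^ 2 + ‖h.2‖ ^ 2) ≤ (r ^ 2) ^ n * (2 * ‖h‖ ^ 2) := by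
          apply mul_le_mul_of_nonneg_left _ (by positivity)
          nlinarith [norm_nonneg h.1, norm_nonneg h.2, norm_nonneg h]
        have h5 : (r ^ 2) ^ n * (2 * ‖h‖ ^ 2) ≤ (2 * r ^ n * ‖h‖) ^ 2 := by
          have : (r ^ 2) ^ n = (r ^ n) ^ 2 := by ring
          rw [this]
          nlinarith [sq_nonneg (r ^ n * ‖h‖)]
        linarith
      nlinarith [norm_nonneg ((x ^ n) h), mul_nonneg (mul_nonneg (by norm_num : (0:ℝ) ≤ 2)
        (pow_nonneg hr0 n)) (norm_nonneg h)]
    obtain ⟨n, hn⟩ := exists_pow_lt_of_lt_one (by norm_num : (0:ℝ) < 1/2) hr1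
    have : ‖x ^ n‖ < 1 := lt_of_le_of_lt (hxn n) (by linarith)
    exact isUnit_one_sub_of_pow_norm_lt_one (x := x) (n := n) this
  refine ⟨hunit, ?_, ?_⟩
  · -- analyticity
    set P₁ : (H₁ × H₂) →L[ℂ] (H₁ × H₂) :=
      (ContinuousLinearMap.id ℂ H₁).prodMap (0 : H₂ →L[ℂ] H₂) with hP₁
    set P₂ : (H₁ × H₂) →L[ℂ] (H₁ × H₂) :=
      (0 : H₁ →L[ℂ] H₁).prodMap (ContinuousLinearMap.id ℂ H₂) with hP₂
    set L : (ℂ × ℂ) →L[ℂ] ((H₁ × H₂) →L[ℂ] (H₁ × H₂)) :=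
      (ContinuousLinearMap.fst ℂ ℂ ℂ).smulRight P₁
        + (ContinuousLinearMap.snd ℂ ℂ ℂ).smulRight P₂ with hL
    have hdiagL : ∀ w : ℂ × ℂ, (diagOp₂ w.1 w.2 : (H₁ × H₂) →L[ℂ] (H₁ × H₂)) = L w := by
      intro w
      refine ContinuousLinearMap.ext fun h => Prod.ext ?_ ?_ <;>
        simp [diagOp₂, hL, hP₁, hP₂]
    set Φ : ((H₁ × H₂) →L[ℂ] (H₁ × H₂)) →L[ℂ] (U →L[ℂ] Y) :=
      ((ContinuousLinearMap.compL ℂ U (H₁ × H₂) Y) C).comp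
        ((ContinuousLinearMap.compL ℂ U (H₁ × H₂) (H₁ × H₂)).flip B) with hΦ
    have hfun : (fun w : ℂ × ℂ =>
          D + C ∘L diagOp₂ w.1 w.2 ∘L Ring.inverse (1 - A * diagOp₂ w.1 w.2) ∘L B)
        = fun w : ℂ × ℂ => D + Φ (L w * Ring.inverse (1 - A * L w)) := by
      funext w
      rw [← hdiagL w]
      rfl
    rw [hfun]
    intro w hw
    have hu : IsUnit (1 - A * L w) := by rw [← hdiagL w]; exact hunit w hw
    exact aux_transfer_analytic Φ A D L hu
  · -- norm bound
    rintro ⟨z, ζ⟩ ⟨hz, hζ⟩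
    set G : (H₁ × H₂) →L[ℂ] (H₁ × H₂) := diagOp₂ z ζ with hG
    set V := Ring.inverse (1 - A * G) with hV
    apply ContinuousLinearMap.opNorm_le_bound _ zero_le_one
    intro u
    rw [one_mul]
    set k : H₁ × H₂ := V (B u) with hk
    have hVu : (1 - A * G) k = B u := by
      have := Ring.mul_inverse_cancel _ (hunit (z, ζ) ⟨hz, hζ⟩)
      calc (1 - A * G) k = ((1 - A * G) * V) (B u) := rfl
        _ = B u := by rw [this]; rfl
    have hAGk : A (G k) + B u = k := by
      have h1 : (1 - A * G) k = k - A (G k) := by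
        simp [ContinuousLinearMap.sub_apply, ContinuousLinearMap.mul_apply]
      rw [h1] at hVu
      rw [← hVu]; abel
    have happ : (D + C ∘L G ∘L V ∘L B) u = C (G k) + D u := by
      simp only [ContinuousLinearMap.add_apply, ContinuousLinearMap.comp_apply]
      rw [add_comm]
    rw [happ]
    have hMk := hM (G k).1 (G k).2 u
    rw [Prod.mk.eta, hAGk] at hMk
    have hGk : G k = (z • k.1, ζ • k.2) := hGapp z ζ k
    rw [hGk] at hMk
    simp only [norm_smul] at hMk
    have hsq : ‖C (G k) + D u‖ ^ 2 ≤ ‖u‖ ^ 2 := by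
      rw [hGk]
      nlinarith [norm_nonneg k.1, norm_nonneg k.2, norm_nonneg z, norm_nonneg ζ,
        sq_nonneg ‖k.1‖, sq_nonneg ‖k.2‖,
        mul_le_mul (le_of_lt hz) (le_of_lt hz) (norm_nonneg z) zero_le_one,
        mul_le_mul (le_of_lt hζ) (le_of_lt hζ) (norm_nonneg ζ) zero_le_one]
    nlinarith [norm_nonneg (C (G k) + D u), norm_nonneg u]
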